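/- Robustness of the personalized guarantee to a new user (core inequality of Theorem 5.1): In addition to the original users N, add a new user ⋆ with finite nonempty action type A_⋆. For each provider j ∈ T, fix β_j ∈ (0,1) and an arbitrary function f_j : A_⋆ × Y → [0,1], and define the augmented provider utility û_j(a, a_⋆, y) = (1−β_j)·u^P_j(a, y) + β_j·f_j(a_⋆, y) on (∏_{i∈N} A_i) × A_⋆ × Y. Fix an original user i₀ ∈ N, real numbers ε_U ≥ 0, ε_P ≥ 0, B ∈ ℝ, and (ε_U, ε_P)-Weak Market Alignment data (F_{j,i}, λ_{j,i}, c_j, w_{j,i}, c_i) for the original utilities (u_i)_{i∈N} and (u^P_j)_{j∈T}. Let μ and ν be probability distributions on (∏_{i∈N} A_i) × A_⋆ × Y such that: (1) for every j ∈ T, E_ν[û_j] ≤ E_μ[û_j]; (2) for every j ∈ T and every original user i ≠ i₀, E_ν[F_{j,i}(a_i,y)] = E_μ[F_{j,i}(a_i,y)], and for every j ∈ T, E_ν[f_j(a_⋆,y)] = E_μ[f_j(a_⋆,y)]; and (3) E_ν[u_{i₀}(a_{i₀},y)] ≥ B. Then E_μ[u_{i₀}(a_{i₀},y)] ≥ B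 − 2ε_U − 2ε_P·μ_{i₀}, where μ_{i₀} = ∑_{j∈T : w_{j,i₀}>0} w_{j,i₀}/λ_{j,i₀}. -/
import Mathlib


open scoped Classical

/-- Expectation of `f` under a distribution `p` on a finite type. -/
noncomputable def Ex {X : Type*} [Fintype X] (p : X → ℝ) (f : X → ℝ) : ℝ :=
  ∑ x, p x * f x

lemma Ex_sub' {X : Type*} [Fintype X] (p f g : X → ℝ) :
    (∑ x, p x * (f x - g x)) = (∑ x, p x * f x) - ∑ x, p x * g x := by
  simp [mul_sub, Finset.sum_sub_distrib]

lemma abs_Ex_le' {X : Type*} [Fintype X] (p : X → ℝ) (hp : ∀ x, 0 ≤ p x)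
    (hp1 : ∑ x, p x = 1) (g : X → ℝ) (ε : ℝ) (hb : ∀ x, |g x| ≤ ε) :
    |∑ x, p x * g x| ≤ ε := by
  calc |∑ x, p x * g x| ≤ ∑ x, |p x * g x| := Finset.abs_sum_le_sum_abs _ _
    _ ≤ ∑ x, p x * ε := by
        apply Finset.sum_le_sum
        intro x _
        rw [abs_mul, abs_of_nonneg (hp x)]
        exact mul_le_mul_of_nonneg_left (hb x) (hp x)
    _ = ε := by rw [← Finset.sum_mul, hp1, one_mul]

/-- Robustness of the personalized guarantee to a new user (core inequality of
Theorem 5.1): add a new user `⋆` with action type `A⋆` and augment each provider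
`j`'s utility to `û_j(a, a⋆, y) = (1−β_j)·u^P_j(a,y) + β_j·f_j(a⋆,y)`. Given
`(ε_U, ε_P)`-Weak Market Alignment data for the original utilities, if `μ` and `ν`
are distributions on `(∏_i A_i) × A⋆ × Y` such that (1) no provider profits from the
deviation (in augmented utility), (2) the deviation changes neither any original user
`i ≠ i₀`'s component nor the new user's component, and (3) the deviation gives user
`i₀` expected utility at least `B`, then under `μ` user `i₀`'s expected utility is at
least `B − 2ε_U − 2ε_P·μ_{i₀}` with `μ_{i₀} = ∑_{j : w_{j,i₀}>0} w_{j,i₀}/λ_{j,i₀}`. -/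
theorem personalized_guarantee_new_user
    {N T Y : Type*} [Fintype N] [Nonempty N] [Fintype T] [Nonempty T]
    [Fintype Y] [Nonempty Y]
    {A : N → Type*} [∀ i, Fintype (A i)] [∀ i, Nonempty (A i)]
    {AStar : Type*} [Fintype AStar] [Nonempty AStar]
    (u : ∀ i : N, A i → Y → ℝ) (uP : T → (∀ i, A i) → Y → ℝ)
    (hu : ∀ i (a : A i) (y : Y), u i a y ∈ Set.Icc (0 : ℝ) 1)
    (huP : ∀ j (a : ∀ i, A i) (y : Y), uP j a y ∈ Set.Icc (0 : ℝ) 1)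
    -- the augmentation: β_j ∈ (0,1) and arbitrary f_j : A⋆ × Y → [0,1]
    (β : T → ℝ) (hβ : ∀ j, β j ∈ Set.Ioo (0 : ℝ) 1)
    (f : T → AStar → Y → ℝ)
    (hf : ∀ j (aStar : AStar) (y : Y), f j aStar y ∈ Set.Icc (0 : ℝ) 1)
    (i₀ : N) (εU εP B : ℝ) (hεU : 0 ≤ εU) (hεP : 0 ≤ εP)
    -- Weak Market Alignment data for the ORIGINAL utilities
    (F : T → ∀ i : N, A i → Y → ℝ)
    (lam : T → N → ℝ) (cP : T → ℝ) (w : T → N → ℝ) (cU : N → ℝ)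
    (hF : ∀ j i (a : A i) (y : Y), 0 ≤ F j i a y)
    (hlam : ∀ j i, 0 ≤ lam j i)
    (hw : ∀ j i, 0 ≤ w j i)
    (hP : ∀ j (a : ∀ i, A i) (y : Y),
      |uP j a y - (∑ i, lam j i * F j i (a i) y + cP j)| ≤ εP)
    (hU : ∀ i (a : A i) (y : Y),
      |u i a y - (∑ j, w j i * F j i a y + cU i)| ≤ εU)
    (hcov : ∀ i, ∃ j, 0 < lam j i ∧ 0 < w j i)
    (himp : ∀ j i, 0 < w j i → 0 < lam j i)
    -- the two distributions over ((∏ i, A i) × A⋆ × Y)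
    (μ ν : (∀ i, A i) × AStar × Y → ℝ)
    (hμ0 : ∀ x, 0 ≤ μ x) (hμ1 : ∑ x, μ x = 1)
    (hν0 : ∀ x, 0 ≤ ν x) (hν1 : ∑ x, ν x = 1)
    -- (1) no provider profits from the deviation, in augmented utility
    (h1 : ∀ j,
      Ex ν (fun x => (1 - β j) * uP j x.1 x.2.2 + β j * f j x.2.1 x.2.2) ≤
      Ex μ (fun x => (1 - β j) * uP j x.1 x.2.2 + β j * f j x.2.1 x.2.2))
    -- (2) the deviation changes only user i₀'s induced distribution
    (h2 : ∀ j, ∀ i, i ≠ i₀ →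
      Ex ν (fun x => F j i (x.1 i) x.2.2) = Ex μ (fun x => F j i (x.1 i) x.2.2))
    (h2' : ∀ j,
      Ex ν (fun x => f j x.2.1 x.2.2) = Ex μ (fun x => f j x.2.1 x.2.2))
    -- (3) the deviation gives user i₀ expected utility at least B
    (h3 : B ≤ Ex ν (fun x => u i₀ (x.1 i₀) x.2.2)) :
    Ex μ (fun x => u i₀ (x.1 i₀) x.2.2) ≥
      B - 2 * εU - 2 * εP *
        ∑ j ∈ Finset.univ.filter (fun j : T => 0 < w j i₀), w j i₀ / lam j i₀ := by
  -- notation for induced expectations of F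
  set Mμ : T → N → ℝ := fun j i => Ex μ (fun x => F j i (x.1 i) x.2.2) with hMμ
  set Mν : T → N → ℝ := fun j i => Ex ν (fun x => F j i (x.1 i) x.2.2) with hMν
  -- linearity computation for provider's approximate utility
  have keyP : ∀ (p : ((∀ i, A i) × AStar × Y) → ℝ), (∑ x, p x = 1) → ∀ j,
      Ex p (fun x => ∑ i, lam j i * F j i (x.1 i) x.2.2 + cP j)
        = (∑ i, lam j i * Ex p (fun x => F j i (x.1 i) x.2.2)) + cP j := by
    intro p hp1 j
    simp only [Ex, mul_add, Finset.sum_add_distrib, Finset.mul_sum, ← Finset.sum_mul, hp1,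
      one_mul]
    congr 1
    rw [Finset.sum_comm]
    refine Finset.sum_congr rfl fun i _ => ?_
    exact Finset.sum_congr rfl fun x _ => by ring
  -- linearity computation for user's approximate utility
  have keyU : ∀ (p : ((∀ i, A i) × AStar × Y) → ℝ), (∑ x, p x = 1) →
      Ex p (fun x => ∑ j, w j i₀ * F j i₀ (x.1 i₀) x.2.2 + cU i₀)
        = (∑ j, w j i₀ * Ex p (fun x => F j i₀ (x.1 i₀) x.2.2)) + cU i₀ := by
    intro p hp1
    simp only [Ex, mul_add, Finset.sum_add_distrib, Finset.mul_sum, ← Finset.sum_mul, hp1,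
      one_mul]
    congr 1
    rw [Finset.sum_comm]
    refine Finset.sum_congr rfl fun j _ => ?_
    exact Finset.sum_congr rfl fun x _ => by ring
  -- Step A: no provider profits, in original utility
  have hsplit : ∀ (p : ((∀ i, A i) × AStar × Y) → ℝ) j,
      Ex p (fun x => (1 - β j) * uP j x.1 x.2.2 + β j * f j x.2.1 x.2.2)
        = (1 - β j) * Ex p (fun x => uP j x.1 x.2.2)
          + β j * Ex p (fun x => f j x.2.1 x.2.2) := by
    intro p j
    simp only [Ex, mul_add, Finset.sum_add_distrib, Finset.mul_sum]
    congr 1 <;> exact Finset.sum_congr rfl fun x _ => by ring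
  have hA : ∀ j, Ex ν (fun x => uP j x.1 x.2.2) ≤ Ex μ (fun x => uP j x.1 x.2.2) := by
    intro j
    have h := h1 j
    rw [hsplit ν j, hsplit μ j, h2' j] at h
    have hb : 0 < 1 - β j := by have := (hβ j).2; linarith
    nlinarith [h]
  -- Step B: approximate expectations of provider utilities
  have hBμ : ∀ j, |Ex μ (fun x => uP j x.1 x.2.2) - ((∑ i, lam j i * Mμ j i) + cP j)| ≤ εP := by
    intro j
    rw [← keyP μ hμ1 j, show Ex μ (fun x => uP j x.1 x.2.2) -
        Ex μ (fun x => ∑ i, lam j i * F j i (x.1 i) x.2.2 + cP j)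
      = ∑ x, μ x * ((fun x : ((∀ i, A i) × AStar × Y) => uP j x.1 x.2.2) x
          - (fun x : ((∀ i, A i) × AStar × Y) => ∑ i, lam j i * F j i (x.1 i) x.2.2 + cP j) x) from
      (Ex_sub' μ _ _).symm]
    exact abs_Ex_le' μ hμ0 hμ1 _ εP fun x => hP j x.1 x.2.2
  have hBν : ∀ j, |Ex ν (fun x => uP j x.1 x.2.2) - ((∑ i, lam j i * Mν j i) + cP j)| ≤ εP := by
    intro j
    rw [← keyP ν hν1 j, show Ex ν (fun x => uP j x.1 x.2.2) -
        Ex ν (fun x => ∑ i, lam j i * F j i (x.1 i) x.2.2 + cP j)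
      = ∑ x, ν x * ((fun x : ((∀ i, A i) × AStar × Y) => uP j x.1 x.2.2) x
          - (fun x : ((∀ i, A i) × AStar × Y) => ∑ i, lam j i * F j i (x.1 i) x.2.2 + cP j) x) from
      (Ex_sub' ν _ _).symm]
    exact abs_Ex_le' ν hν0 hν1 _ εP fun x => hP j x.1 x.2.2
  -- Step C: for providers with positive weight on i₀
  have hC : ∀ j, 0 < w j i₀ → Mν j i₀ ≤ Mμ j i₀ + 2 * εP / lam j i₀ := by
    intro j hwj
    have hl : 0 < lam j i₀ := himp j i₀ hwj
    have hsum : (∑ i, lam j i * Mν j i) - (∑ i, lam j i * Mμ j i)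
        = lam j i₀ * (Mν j i₀ - Mμ j i₀) := by
      rw [← Finset.sum_sub_distrib]
      rw [Finset.sum_eq_single i₀]
      · ring
      · intro i _ hi
        rw [hMν, hMμ]
        simp [h2 j i hi]
      · simp
    have h1' := abs_le.1 (hBμ j)
    have h2'' := abs_le.1 (hBν j)
    have hAj := hA j
    have hkey : lam j i₀ * (Mν j i₀ - Mμ j i₀) ≤ 2 * εP := by
      rw [← hsum]; linarith [h1'.1, h1'.2, h2''.1, h2''.2]
    rw [mul_comm] at hkey
    have hd : Mν j i₀ - Mμ j i₀ ≤ 2 * εP / lam j i₀ := (le_div_iff₀ hl).mpr hkey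
    linarith
  -- Step D: approximate expectations of user i₀'s utility
  have hDμ : |Ex μ (fun x => u i₀ (x.1 i₀) x.2.2) - ((∑ j, w j i₀ * Mμ j i₀) + cU i₀)| ≤ εU := by
    rw [← keyU μ hμ1, show Ex μ (fun x => u i₀ (x.1 i₀) x.2.2) -
        Ex μ (fun x => ∑ j, w j i₀ * F j i₀ (x.1 i₀) x.2.2 + cU i₀)
      = ∑ x, μ x * ((fun x : ((∀ i, A i) × AStar × Y) => u i₀ (x.1 i₀) x.2.2) x
          - (fun x : ((∀ i, A i) × AStar × Y) => ∑ j, w j i₀ * F j i₀ (x.1 i₀) x.2.2 + cU i₀) x) from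
      (Ex_sub' μ _ _).symm]
    exact abs_Ex_le' μ hμ0 hμ1 _ εU fun x => hU i₀ (x.1 i₀) x.2.2
  have hDν : |Ex ν (fun x => u i₀ (x.1 i₀) x.2.2) - ((∑ j, w j i₀ * Mν j i₀) + cU i₀)| ≤ εU := by
    rw [← keyU ν hν1, show Ex ν (fun x => u i₀ (x.1 i₀) x.2.2) -
        Ex ν (fun x => ∑ j, w j i₀ * F j i₀ (x.1 i₀) x.2.2 + cU i₀)
      = ∑ x, ν x * ((fun x : ((∀ i, A i) × AStar × Y) => u i₀ (x.1 i₀) x.2.2) x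
          - (fun x : ((∀ i, A i) × AStar × Y) => ∑ j, w j i₀ * F j i₀ (x.1 i₀) x.2.2 + cU i₀) x) from
      (Ex_sub' ν _ _).symm]
    exact abs_Ex_le' ν hν0 hν1 _ εU fun x => hU i₀ (x.1 i₀) x.2.2
  -- combine
  have hcmp : (∑ j, w j i₀ * Mν j i₀) ≤ (∑ j, w j i₀ * Mμ j i₀)
      + 2 * εP * ∑ j ∈ Finset.univ.filter (fun j : T => 0 < w j i₀), w j i₀ / lam j i₀ := by
    rw [← sub_le_iff_le_add', ← Finset.sum_sub_distrib]
    have hzero : ∀ j ∈ Finset.univ \ Finset.univ.filter (fun j : T => 0 < w j i₀),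
        w j i₀ * Mν j i₀ - w j i₀ * Mμ j i₀ = 0 := by
      intro j hj
      simp only [Finset.mem_sdiff, Finset.mem_filter, Finset.mem_univ, true_and,
        not_lt] at hj
      have : w j i₀ = 0 := le_antisymm hj (hw j i₀)
      simp [this]
    calc (∑ j : T, (w j i₀ * Mν j i₀ - w j i₀ * Mμ j i₀))
        = ∑ j ∈ Finset.univ.filter (fun j : T => 0 < w j i₀),
            (w j i₀ * Mν j i₀ - w j i₀ * Mμ j i₀) := by
          exact (Finset.sum_subset (Finset.filter_subset _ _)
            (fun j _ hj => hzero j (by simp_all))).symm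
      _ ≤ ∑ j ∈ Finset.univ.filter (fun j : T => 0 < w j i₀),
            2 * εP * (w j i₀ / lam j i₀) := by
          apply Finset.sum_le_sum
          intro j hj
          simp only [Finset.mem_filter, Finset.mem_univ, true_and] at hj
          have hl : 0 < lam j i₀ := himp j i₀ hj
          have := hC j hj
          have hle : Mν j i₀ - Mμ j i₀ ≤ 2 * εP / lam j i₀ := by linarith
          calc w j i₀ * Mν j i₀ - w j i₀ * Mμ j i₀
              = w j i₀ * (Mν j i₀ - Mμ j i₀) := by ring
            _ ≤ w j i₀ * (2 * εP / lam j i₀) :=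
                mul_le_mul_of_nonneg_left hle (hw j i₀)
            _ = 2 * εP * (w j i₀ / lam j i₀) := by ring
      _ = 2 * εP * ∑ j ∈ Finset.univ.filter (fun j : T => 0 < w j i₀),
            w j i₀ / lam j i₀ := by rw [Finset.mul_sum]
  have hdμ := abs_le.1 hDμ
  have hdν := abs_le.1 hDν
  linarith [hdμ.1, hdμ.2, hdν.1, hdν.2, hcmp, h3]
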